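/- arXiv:2310.10150 — 4 statements merged into one kernel-verified Lean document; each statement's English description precedes it below -/
import Mathlib

section
/- Let $H$ be a derivation of a commutative ring $A$ equipped with a distinguished derivation $\partial_x$ such that $[H, \partial_x] = 0$. Let $f \in A$ with $1+f$ invertible, and suppose $H(f) = \partial_x R$ for some $R \in A$. Define the operator $\partial_y := (1+f)^{-1}\partial_x$. Then $H - R\partial_y$ is a derivation of $A$ that commutes with $\partial_y$, i.e., $[H - R\partial_y, \partial_y] = 0$. -/
/-!
Write `∂_y = v • ∂_x` with `v = (1 + f)⁻¹`. Since `H` commutes with `∂_x`, the Leibniz rule gives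
`⁅H, ∂_y⁆ = H(v) ∂_x`, and `H v = -v² H(1 + f) = -v² ∂_x R`, so `⁅H, ∂_y⁆ = -(∂_y R) ∂_y`.
This is exactly `⁅R ∂_y, ∂_y⁆`, so the two cancel.
-/

namespace Derivation

def ofAddLeibniz {A : Type*} [CommRing A] (D : A → A) (hadd : ∀ a b, D (a + b) = D a + D b)
    (hmul : ∀ a b, D (a * b) = a * D b + D a * b) : Derivation ℤ A A :=
  mk' (AddMonoidHom.mk' D hadd).toIntLinearMap fun a b => by
    simp [hmul, smul_eq_mul, mul_comm]

@[simp]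
theorem coe_ofAddLeibniz {A : Type*} [CommRing A] (D : A → A) (hadd) (hmul) :
    ⇑(ofAddLeibniz (A := A) D hadd hmul) = D :=
  rfl

variable {R A : Type*} [CommRing R] [CommRing A] [Algebra R A]

theorem apply_apply_comm_of_commutator_eq_zero {D₁ D₂ : Derivation R A A} (h : ⁅D₁, D₂⁆ = 0)
    (a : A) : D₁ (D₂ a) = D₂ (D₁ a) := by
  rw [← sub_eq_zero, ← commutator_apply, h, zero_apply]

theorem commutator_sub_smul_smul_eq_zero {H D : Derivation R A A} (hHD : ⁅H, D⁆ = 0)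
    {f r v : A} (hv : v * (1 + f) = 1) (hf : H f = D r) :
    ⁅H - r • v • D, v • D⁆ = 0 := by
  have hHv : H v = -v ^ 2 * D r := by
    rw [H.leibniz_of_mul_eq_one hv, map_add, map_one_eq_zero, zero_add, hf, smul_eq_mul]
  have hDv : D v = -v ^ 2 * D f := by
    rw [D.leibniz_of_mul_eq_one hv, map_add, map_one_eq_zero, zero_add, smul_eq_mul]
  ext a
  simp only [commutator_apply, sub_apply, smul_apply, smul_eq_mul, leibniz, map_sub, zero_apply,
    hHv, hDv, apply_apply_comm_of_commutator_eq_zero hHD]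
  ring

end Derivation

/-- if `H` is a derivation commuting with `∂_x`, `1+f` is invertible
(with inverse `v`), and `H f = ∂_x R`, then `H - R ∂_y` (where `∂_y = (1+f)⁻¹ ∂_x`)
is a derivation commuting with `∂_y`. -/
theorem statement1 (A : Type*) [CommRing A] (H dX : A → A)
    (hHadd : ∀ a b, H (a + b) = H a + H b)
    (hHmul : ∀ a b, H (a * b) = a * H b + H a * b)
    (hdadd : ∀ a b, dX (a + b) = dX a + dX b)
    (hdmul : ∀ a b, dX (a * b) = a * dX b + dX a * b)
    (hcomm : ∀ a, H (dX a) = dX (H a))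
    (f R v : A) (hv : v * (1 + f) = 1) (hR : H f = dX R)
    (dY : A → A) (hdY : ∀ a, dY a = v * dX a)
    (F : A → A) (hF : ∀ a, F a = H a - R * dY a) :
    (∀ a b, F (a + b) = F a + F b) ∧
    (∀ a b, F (a * b) = a * F b + F a * b) ∧
    (∀ a, F (dY a) = dY (F a)) := by
  set DH := Derivation.ofAddLeibniz H hHadd hHmul
  set Dx := Derivation.ofAddLeibniz dX hdadd hdmul
  have hdY' : dY = ⇑(v • Dx) := funext fun a => by simp [Dx, hdY]
  have hF' : F = ⇑(DH - R • v • Dx) := funext fun a => by simp [DH, Dx, hF, hdY]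
  have hcomm' : ⁅DH, Dx⁆ = 0 := by
    ext a
    simp [DH, Dx, Derivation.commutator_apply, hcomm]
  subst hF' hdY'
  refine ⟨map_add _, fun a b => ?_,
    Derivation.apply_apply_comm_of_commutator_eq_zero
      (Derivation.commutator_sub_smul_smul_eq_zero hcomm' hv hR)⟩
  rw [Derivation.leibniz, smul_eq_mul, smul_eq_mul, mul_comm b]
end

section
/- Let $A$ be a commutative ring with derivation $\partial_x$, let $H$ be a derivation of $A$ commuting with $\partial_x$, let $f \in A$ with $1+f$ invertible and $H(f) = \partial_x R$. Set $\partial_y := (1+f)^{-1}\partial_x$. If $g \in A$ satisfies $H(g) = \partial_x R_g$ for some $R_g \in A$, then $(H - R\partial_y)\left(\frac{g}{1+f}\right) = \partial_y\left(R_g - \frac{gR}{1+f}\right)$. -/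
/-! The inverse `v = (1 + f)⁻¹` satisfies `H v = -v² H f = -v² ∂ₓ R`; expanding both sides of the
identity with the Leibniz rule then leaves a polynomial identity in `v`, `g`, `R` and the
`∂ₓ`-derivatives of `g`, `R`, `R_g`, `v`. -/

namespace Derivation

def ofMapAddMapMul {A : Type*} [CommRing A] (D : A → A)
    (hadd : ∀ a b, D (a + b) = D a + D b) (hmul : ∀ a b, D (a * b) = a * D b + D a * b) :
    Derivation ℤ A A :=
  Derivation.mk' (AddMonoidHom.mk' D hadd).toIntLinearMap fun a b => by
    simp [hmul, mul_comm]

variable {R A : Type*} [CommRing R] [CommRing A] [Algebra R A]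

theorem map_inv_one_add {H D : Derivation R A A} {f r v : A} (hv : v * (1 + f) = 1)
    (hf : H f = D r) : H v = -v ^ 2 * D r := by
  rw [H.leibniz_of_mul_eq_one hv, H.map_add, H.map_one_eq_zero, zero_add, hf, smul_eq_mul]

theorem map_mul_inv_one_add_sub {H D : Derivation R A A} {f r v g rg : A}
    (hv : v * (1 + f) = 1) (hf : H f = D r) (hg : H g = D rg) :
    H (g * v) - r * (v * D (g * v)) = v * D (rg - g * r * v) := by
  rw [H.leibniz, map_inv_one_add hv hf, hg, D.map_sub, D.leibniz, D.leibniz, D.leibniz]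
  simp only [smul_eq_mul]
  ring

end Derivation

theorem statement3_general (A : Type*) [CommRing A] (H dX : A → A)
    (hHadd : ∀ a b, H (a + b) = H a + H b)
    (hHmul : ∀ a b, H (a * b) = a * H b + H a * b)
    (hdadd : ∀ a b, dX (a + b) = dX a + dX b)
    (hdmul : ∀ a b, dX (a * b) = a * dX b + dX a * b)
    (f R v : A) (hv : v * (1 + f) = 1) (hR : H f = dX R)
    (dY : A → A) (hdY : ∀ a, dY a = v * dX a)
    (g Rg : A) (hg : H g = dX Rg) :
    H (g * v) - R * dY (g * v) = dY (Rg - g * R * v) := by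
  rw [hdY, hdY]
  exact Derivation.map_mul_inv_one_add_sub (H := .ofMapAddMapMul H hHadd hHmul)
    (D := .ofMapAddMapMul dX hdadd hdmul) hv hR hg

/-- if `H g = ∂_x R_g`, then
`(H - R ∂_y)(g/(1+f)) = ∂_y (R_g - gR/(1+f))`, where `∂_y = (1+f)⁻¹ ∂_x`,
`H f = ∂_x R`, and `v = (1+f)⁻¹`. -/
theorem statement3 (A : Type*) [CommRing A] (H dX : A → A)
    (hHadd : ∀ a b, H (a + b) = H a + H b)
    (hHmul : ∀ a b, H (a * b) = a * H b + H a * b)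
    (hdadd : ∀ a b, dX (a + b) = dX a + dX b)
    (hdmul : ∀ a b, dX (a * b) = a * dX b + dX a * b)
    (hcomm : ∀ a, H (dX a) = dX (H a))
    (f R v : A) (hv : v * (1 + f) = 1) (hR : H f = dX R)
    (dY : A → A) (hdY : ∀ a, dY a = v * dX a)
    (g Rg : A) (hg : H g = dX Rg) :
    H (g * v) - R * dY (g * v) = dY (Rg - g * R * v) :=
  statement3_general A H dX hHadd hHmul hdadd hdmul f R v hv hR dY hdY g Rg hg
end

section
/- Let $A$ be a commutative ring with derivation $\partial_x$, let $H$ be a derivation commuting with $\partial_x$, let $f \in A$ with $1+f$ invertible and $H(f) = \partial_x R$, and set $\partial_y := (1+f)^{-1}\partial_x$. If $\tilde g \in A$ satisfies $(H - R\partial_y)(\tilde g) = \partial_y R_{\tilde g}$ for some $R_{\tilde g} \in A$, then $H((1+f)\tilde g) = \partial_x(R_{\tilde g} + \tilde g R)$. -/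
/-! Clearing the factor `v = (1+f)⁻¹` in the hypothesis gives `(1+f) H g̃ = R ∂_x g̃ + ∂_x R_g̃`;
the Leibniz rule for `H` adds the term `H(f) g̃ = g̃ ∂_x R`, and the sum is `∂_x (R_g̃ + g̃ R)` by
the Leibniz rule for `∂_x`. -/

theorem mul_eq_of_sub_mul_inv_eq {A : Type*} [CommRing A] {f v R a b c : A}
    (hv : v * (1 + f) = 1) (h : a - R * (v * b) = v * c) :
    (1 + f) * a = R * b + c := by
  linear_combination (1 + f) * h + (R * b + c) * hv

theorem statement4_general (A : Type*) [CommRing A] (H dX : A → A)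
    (hHadd : ∀ a b, H (a + b) = H a + H b)
    (hHmul : ∀ a b, H (a * b) = a * H b + H a * b)
    (hdadd : ∀ a b, dX (a + b) = dX a + dX b)
    (hdmul : ∀ a b, dX (a * b) = a * dX b + dX a * b)
    (f R v : A) (hv : v * (1 + f) = 1) (hR : H f = dX R)
    (dY : A → A) (hdY : ∀ a, dY a = v * dX a)
    (tg Rtg : A) (htg : H tg - R * dY tg = dY Rtg) :
    H ((1 + f) * tg) = dX (Rtg + tg * R) := by
  have hcleared : (1 + f) * H tg = R * dX tg + dX Rtg := by
    rw [hdY, hdY] at htg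
    exact mul_eq_of_sub_mul_inv_eq hv htg
  calc H ((1 + f) * tg)
      = (1 + f) * H tg + H f * tg := by
        rw [hHmul, hHadd, show H 1 = 0 by simpa using hHmul 1 1]
        ring
    _ = R * dX tg + dX Rtg + dX R * tg := by rw [hcleared, hR]
    _ = dX (Rtg + tg * R) := by rw [hdadd, hdmul]; ring

/-- if `(H - R ∂_y)(g̃) = ∂_y R_g̃`, then
`H ((1+f) g̃) = ∂_x (R_g̃ + g̃ R)`, where `∂_y = (1+f)⁻¹ ∂_x`, `H f = ∂_x R`,
and `v = (1+f)⁻¹`. -/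
theorem statement4 (A : Type*) [CommRing A] (H dX : A → A)
    (hHadd : ∀ a b, H (a + b) = H a + H b)
    (hHmul : ∀ a b, H (a * b) = a * H b + H a * b)
    (hdadd : ∀ a b, dX (a + b) = dX a + dX b)
    (hdmul : ∀ a b, dX (a * b) = a * dX b + dX a * b)
    (hcomm : ∀ a, H (dX a) = dX (H a))
    (f R v : A) (hv : v * (1 + f) = 1) (hR : H f = dX R)
    (dY : A → A) (hdY : ∀ a, dY a = v * dX a)
    (tg Rtg : A) (htg : H tg - R * dY tg = dY Rtg) :
    H ((1 + f) * tg) = dX (Rtg + tg * R) :=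
  statement4_general A H dX hHadd hHmul hdadd hdmul f R v hv hR dY hdY tg Rtg htg
end

section
/- Let $\xi \in \mathbb C$ and work in $\mathbb C[[\bar u^1, \bar u^2]]$. For $d \geq -1$ define $2\times 2$ matrices $P_d := \begin{pmatrix} \frac{(\bar u^1)^{d+1}}{(d+1)!} & M_d \\ 0 & \frac{(\bar u^2)^{d+1}}{(d+1)!} \end{pmatrix}$ where $M_d := -\frac{\xi\left((\bar u^1)^{d+2} - (d+2)\bar u^1(\bar u^2)^{d+1} + (d+1)(\bar u^2)^{d+2}\right)}{(d+2)!}$ for $d \geq 0$ and $P_{-1} := \mathrm{Id}$. Define $C_1 := \begin{pmatrix} \frac{1}{1+\xi\bar u^2} & \frac{\xi(\bar u^2 - \bar u^1)}{1+\xi\bar u^2} \\ 0 & 0 \end{pmatrix}$ and $C_2 := \begin{pmatrix} \frac{\xi(\bar u^2 - \bar u^1)}{1+\xi\bar u^2} & \frac{\xi(\bar u^1 - \bar u^2)(1+\xi\bar u^1)}{1+\xi\bar u^2} \\ 0 & 1 \end{pmatrix}$. Let $D_1 := \frac{1}{1+\xi\bar u^2}\frac{\partial}{\partial\bar u^1}$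 and $D_2 := \xi\frac{\bar u^2 - \bar u^1}{1+\xi\bar u^2}\frac{\partial}{\partial\bar u^1} + \frac{\partial}{\partial\bar u^2}$ (applied entrywise to matrices). Then for all $d \geq 0$ and $\gamma \in \{1,2\}$: $D_\gamma P_d = C_\gamma \cdot P_{d-1}$, and $P_d|_{\bar u^1 = \bar u^2 = 0} = 0$. -/
open scoped Classical

noncomputable section

abbrev S2 := MvPowerSeries (Fin 2) ℂ

/-- Partial derivative `∂/∂u^i` on `ℂ[[u¹,u²]]`, defined coefficientwise. -/
def pdv (i : Fin 2) (f : S2) : S2 := fun m =>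
  (m i + 1) • MvPowerSeries.coeff (m + Finsupp.single i 1) f

def CC (c : ℂ) : S2 := MvPowerSeries.C c

def U1 : S2 := MvPowerSeries.X 0
def U2 : S2 := MvPowerSeries.X 1

/-- The matrices `P_d` of the dispersionless DR hierarchy, indexed so that
`Pmat ξ 0 = P_{-1} = Id` and `Pmat ξ (n+1) = P_n`. -/
def Pmat (ξ : ℂ) : ℕ → Matrix (Fin 2) (Fin 2) S2
  | 0 => 1
  | n + 1 =>
    !![CC ((Nat.factorial (n + 1) : ℂ))⁻¹ * U1 ^ (n + 1),
        -(CC ξ * CC ((Nat.factorial (n + 2) : ℂ))⁻¹ *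
          (U1 ^ (n + 2) - CC ((n : ℂ) + 2) * U1 * U2 ^ (n + 1) +
            CC ((n : ℂ) + 1) * U2 ^ (n + 2)));
      0, CC ((Nat.factorial (n + 1) : ℂ))⁻¹ * U2 ^ (n + 1)]

/-!
With divided powers `x^[k] = x^k / k!` and `k = d + 1`, the matrix `P_d` is
`[[ū¹^[k], -ξ (ū¹^[k+1] - ū¹ ū²^[k] + k ū²^[k+1])], [0, ū²^[k]]]`, a formula which at `k = 0`
also gives `P_{-1} = Id`. For every derivation `D` one checks
`D P_d = [[D ū¹, ξ (ū² - ū¹)(D ū¹ - D ū²)], [0, D ū²]] · P_{d-1}`, the only non-trivial entry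
reducing to `(k + 1) ū²^[k+1] = ū² · ū²^[k]`. Both `D₁ = w ∂₁` and `D₂ = ξ (ū² - ū¹) w ∂₁ + ∂₂` are
derivations; substituting their values on `ū¹, ū²` gives `C₁`, and `C₂` once `(1 + ξ ū²) w = 1`.
-/
open scoped Nat

section DividedPow

variable (K : Type*) {A : Type*} [Field K] [CommRing A] [Algebra K A]

def dividedPow (x : A) (k : ℕ) : A := algebraMap K A (k ! : K)⁻¹ * x ^ k

variable {K}

@[simp]
lemma dividedPow_zero (x : A) : dividedPow K x 0 = 1 := by
  simp [dividedPow]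

@[simp]
lemma dividedPow_one (x : A) : dividedPow K x 1 = x := by
  simp [dividedPow]

variable [CharZero K]

lemma algebraMap_inv_factorial_succ_mul (k : ℕ) :
    algebraMap K A ((k + 1)! : K)⁻¹ * (k + 1 : A) = algebraMap K A (k ! : K)⁻¹ := by
  have h : ((k + 1)! : K)⁻¹ * (k + 1) = (k ! : K)⁻¹ := by
    rw [Nat.factorial_succ, Nat.cast_mul, Nat.cast_succ, mul_inv, mul_right_comm,
      inv_mul_cancel₀ (Nat.cast_add_one_ne_zero k), one_mul]
  simpa using congrArg (algebraMap K A) h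

lemma succ_mul_dividedPow_succ (x : A) (k : ℕ) :
    (k + 1 : A) * dividedPow K x (k + 1) = x * dividedPow K x k := by
  rw [dividedPow, dividedPow, ← algebraMap_inv_factorial_succ_mul k]
  ring

lemma Derivation.map_dividedPow_succ (D : Derivation K A A) (x : A) (k : ℕ) :
    D (dividedPow K x (k + 1)) = D x * dividedPow K x k := by
  rw [dividedPow, dividedPow, D.leibniz, D.map_algebraMap, smul_zero, add_zero, D.leibniz_pow,
    add_tsub_cancel_right, smul_eq_mul, smul_eq_mul, nsmul_eq_mul, Nat.cast_succ,
    ← algebraMap_inv_factorial_succ_mul k]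
  ring

end DividedPow

section PrimaryFlow

variable {K A : Type*} [Field K] [CommRing A] [Algebra K A]

def primaryFlowMatrix (ξ : K) (x y : A) (k : ℕ) : Matrix (Fin 2) (Fin 2) A :=
  !![dividedPow K x k,
      -(algebraMap K A ξ *
        (dividedPow K x (k + 1) - x * dividedPow K y k + k * dividedPow K y (k + 1)));
    0, dividedPow K y k]

lemma primaryFlowMatrix_zero (ξ : K) (x y : A) : primaryFlowMatrix ξ x y 0 = 1 := by
  ext i j
  fin_cases i <;> fin_cases j <;> simp [primaryFlowMatrix]

lemma map_primaryFlowMatrix_succ [CharZero K] (D : Derivation K A A) (ξ : K) (x y : A) (k : ℕ) :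
    (primaryFlowMatrix ξ x y (k + 1)).map D =
      !![D x, algebraMap K A ξ * (y - x) * (D x - D y); 0, D y] * primaryFlowMatrix ξ x y k := by
  have hy := succ_mul_dividedPow_succ (K := K) y k
  ext i j
  fin_cases i <;> fin_cases j <;>
    simp [primaryFlowMatrix, Matrix.mul_apply, D.leibniz, D.map_dividedPow_succ, D.map_algebraMap]
  linear_combination (algebraMap K A ξ * (D x - D y)) * hy

end PrimaryFlow

open MvPowerSeries

lemma pdv_eq_pderiv (i : Fin 2) : pdv i = pderiv ℂ i := by
  funext f
  ext m
  change (m i + 1) • coeff (m + Finsupp.single i 1) f = _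
  simp [coeff_pderiv, mul_comm]

lemma CC_eq_algebraMap (c : ℂ) : CC c = algebraMap ℂ S2 c := rfl

lemma Pmat_eq_primaryFlowMatrix (ξ : ℂ) (k : ℕ) : Pmat ξ k = primaryFlowMatrix ξ U1 U2 k := by
  rcases k with _ | n
  · exact (primaryFlowMatrix_zero ξ U1 U2).symm
  have h := algebraMap_inv_factorial_succ_mul (K := ℂ) (A := S2) (n + 1)
  push_cast at h
  ext i j : 1
  fin_cases i <;> fin_cases j <;>
    simp [Pmat, primaryFlowMatrix, dividedPow, CC_eq_algebraMap, map_ofNat]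
  linear_combination (-(algebraMap ℂ S2 ξ * U1 * U2 ^ (n + 1))) * h

/-- the matrices `P_d` satisfy the recursion `D_γ P_d = C_γ · P_{d-1}`
of the dispersionless DR hierarchy and vanish at the origin. Here
`w = (1+ξū²)⁻¹`, `D₁ = w ∂/∂ū¹`, `D₂ = ξ(ū²-ū¹)w ∂/∂ū¹ + ∂/∂ū²`. -/
theorem statement7 (ξ : ℂ) (w : S2) (hw : (1 + CC ξ * U2) * w = 1)
    (C1 C2 : Matrix (Fin 2) (Fin 2) S2)
    (hC1 : C1 = !![w, CC ξ * (U2 - U1) * w; 0, 0])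
    (hC2 : C2 = !![CC ξ * (U2 - U1) * w, CC ξ * (U1 - U2) * (1 + CC ξ * U1) * w; 0, 1])
    (D1 D2 : Matrix (Fin 2) (Fin 2) S2 → Matrix (Fin 2) (Fin 2) S2)
    (hD1 : ∀ M, D1 M = M.map fun f => w * pdv 0 f)
    (hD2 : ∀ M, D2 M = M.map fun f => CC ξ * (U2 - U1) * w * pdv 0 f + pdv 1 f) :
    ∀ n : ℕ,
      D1 (Pmat ξ (n + 1)) = C1 * Pmat ξ n ∧
      D2 (Pmat ξ (n + 1)) = C2 * Pmat ξ n ∧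
      ∀ i j : Fin 2, MvPowerSeries.constantCoeff (Pmat ξ (n + 1) i j) = 0 := by
  intro n
  simp only [pdv_eq_pderiv] at hD1 hD2
  have hD1' : D1 (Pmat ξ (n + 1)) =
      (Pmat ξ (n + 1)).map (w • pderiv ℂ 0 : Derivation ℂ S2 S2) :=
    hD1 _
  have hD2' : D2 (Pmat ξ (n + 1)) =
      (Pmat ξ (n + 1)).map
        ((CC ξ * (U2 - U1) * w) • pderiv ℂ 0 + pderiv ℂ 1 : Derivation ℂ S2 S2) :=
    hD2 _
  simp only [Pmat_eq_primaryFlowMatrix, map_primaryFlowMatrix_succ] at hD1' hD2' ⊢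
  refine ⟨?_, ?_, ?_⟩
  · rw [hD1', hC1]
    congr 1
    simp [U1, U2, CC_eq_algebraMap]
  · rw [hD2', hC2]
    congr 1
    ext i j : 1
    fin_cases i <;> fin_cases j <;> simp [U1, U2, CC_eq_algebraMap]
    simp only [U2, CC_eq_algebraMap] at hw
    linear_combination (algebraMap ℂ S2 ξ * (X 1 - X 0)) * hw
  · intro i j
    fin_cases i <;> fin_cases j <;> simp [primaryFlowMatrix, dividedPow, U1, U2]

end
end
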